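/- Let μ be an absolutely α-decaying, Federer, compactly supported measure on ℝ^k, let S ⊆ ℝ^{k−1} be K₁-quasiconvex, f : S → ℝ with ‖f''‖_S ≤ K₂/ρ, and let Γ be the graph of f. Then there is a constant C (depending only on K₁, K₂, μ) such that for every ball B = B(x,ρ) with x ∈ supp(μ) and every 0 < ε ≤ 1, μ of the closed ερ-neighborhood of B ∩ Γ is at most C·ε^{α/2} times μ of the closed √ε·ρ-neighborhood of B ∩ Γ. -/

import Mathlib

/-!
Near a point `(z₀, f z₀)`, Taylor's formula along a quasiconvex path shows that `Γ` stays within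
`K₂ (3 K₁ u)² / ρ ≍ ε ρ` of its tangent hyperplane on a ball of radius `u = √ε ρ`. Hence inside
such a ball the `ερ`-neighbourhood of `Γ` lies in the `≍ √ε u`-neighbourhood of a hyperplane, whose
relative measure is `≲ ε^{α/2}` by absolute decay. Covering the support part of the
`ερ`-neighbourhood by Vitali balls of radius `u` whose disjoint quarters lie in the
`√ε ρ`-neighbourhood, and comparing each ball with its quarter by the Federer property, gives the
estimate. For `ε > 1/9` the estimate is trivial.
-/

open MeasureTheory Metric Set
open scoped RealInnerProductSpace

variable {m : ℕ}

/-- The (topological) support of a measure. -/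
def msupp {X : Type*} [MetricSpace X] [MeasurableSpace X] (μ : Measure X) : Set X :=
  {x | ∀ ρ > 0, 0 < μ (Metric.ball x ρ)}

/-- `μ` is absolutely `α`-decaying with constant `C` at scales `≤ ρ₀`: neighborhoods
of affine hyperplanes intersected with balls centered on the support have small measure. -/
def AbsDecaying (α C ρ₀ : ℝ) (μ : Measure (EuclideanSpace ℝ (Fin (m + 1)))) : Prop :=
  ∀ x ∈ msupp μ, ∀ ρ : ℝ, 0 < ρ → ρ ≤ ρ₀ →
    ∀ (w : EuclideanSpace ℝ (Fin (m + 1))) (t : ℝ), w ≠ 0 → ∀ ε : ℝ, 0 < ε →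
      μ (closedBall x ρ ∩ cthickening (ε * ρ) {y | ⟪y, w⟫ = t}) ≤
        ENNReal.ofReal (C * ε ^ α) * μ (closedBall x ρ)

/-- `μ` is Federer (doubling) with constant `C` at scales `≤ ρ₀`. -/
def Federer (C ρ₀ : ℝ) (μ : Measure (EuclideanSpace ℝ (Fin (m + 1)))) : Prop :=
  ∀ x ∈ msupp μ, ∀ ρ : ℝ, 0 < ρ → ρ ≤ ρ₀ →
    μ (closedBall x (2 * ρ)) ≤ ENNReal.ofReal C * μ (closedBall x ρ)

/-- `S` is `K`-quasiconvex. -/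
def IsQuasiconvex (K : ℝ) (S : Set (EuclideanSpace ℝ (Fin m))) : Prop :=
  ∀ x ∈ S, ∀ y ∈ S, ∃ γ : ℝ → EuclideanSpace ℝ (Fin m),
    ContinuousOn γ (Icc 0 1) ∧ γ 0 = x ∧ γ 1 = y ∧ (∀ t ∈ Icc (0:ℝ) 1, γ t ∈ S) ∧
      eVariationOn γ (Icc 0 1) ≤ ENNReal.ofReal (K * ‖y - x‖)

/-- The graph of `f : S → ℝ`, as a subset of `ℝ^{m+1} = ℝ^m × ℝ`. -/
def graphOf (S : Set (EuclideanSpace ℝ (Fin m))) (f : EuclideanSpace ℝ (Fin m) → ℝ) :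
    Set (EuclideanSpace ℝ (Fin (m + 1))) :=
  {p | ∃ z ∈ S, p = WithLp.toLp 2 (Fin.snoc (WithLp.ofLp z) (f z) : Fin (m + 1) → ℝ)}

open Filter Topology

theorem dist_le_sub_of_forall_eventually_dist_le {F : Type*} [PseudoMetricSpace F]
    {φ : ℝ → F} {v : ℝ → ℝ} {a b : ℝ} (hab : a ≤ b) (hv : MonotoneOn v (Icc a b))
    (hloc : ∀ c ∈ Icc a b, ∀ᶠ t in 𝓝[Icc a b] c, dist (φ t) (φ c) ≤ |v t - v c|) :
    dist (φ a) (φ b) ≤ v b - v a := by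
  set A := {t ∈ Icc a b | dist (φ a) (φ t) ≤ v t - v a}
  have extend : ∀ s ∈ A, ∀ t ∈ Icc a b, s ≤ t → dist (φ t) (φ s) ≤ |v t - v s| → t ∈ A := by
    intro s hs t ht hst hdist
    rw [abs_of_nonneg (sub_nonneg.2 (hv hs.1 ht hst))] at hdist
    exact ⟨ht, (dist_triangle _ (φ s) _).trans (by rw [dist_comm (φ s)]; linarith [hs.2])⟩
  have haA : a ∈ A := ⟨left_mem_Icc.2 hab, by simp⟩
  have hAbdd : BddAbove A := ⟨b, fun t ht => ht.1.2⟩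
  have hc : sSup A ∈ Icc a b := ⟨le_csSup hAbdd haA, csSup_le ⟨a, haA⟩ fun t ht => ht.1.2⟩
  obtain ⟨η, hη, hball⟩ := mem_nhdsWithin_iff.1 (hloc _ hc)
  have near : ∀ t ∈ Icc a b, |t - sSup A| < η → dist (φ t) (φ (sSup A)) ≤ |v t - v (sSup A)| :=
    fun t ht hd => hball ⟨mem_ball.2 hd, ht⟩
  have hcA : sSup A ∈ A := by
    obtain ⟨s, hs, hlt⟩ := exists_lt_of_lt_csSup ⟨a, haA⟩ (sub_lt_self _ hη)
    have hsc : s ≤ sSup A := le_csSup hAbdd hs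
    refine extend s hs _ hc hsc ?_
    rw [dist_comm, abs_sub_comm]
    exact near s hs.1 (by rw [abs_sub_lt_iff]; constructor <;> linarith)
  suffices sSup A = b from this ▸ hcA.2
  by_contra hne
  set t := min b (sSup A + η / 2)
  have hct : sSup A < t := lt_min (lt_of_le_of_ne hc.2 hne) (by linarith)
  have ht : t ∈ Icc a b := ⟨hc.1.trans hct.le, min_le_left _ _⟩
  have htA : t ∈ A := extend _ hcA t ht hct.le
    (near t ht (by rw [abs_of_pos (sub_pos.2 hct)]; linarith [min_le_right b (sSup A + η / 2)]))
  exact (le_csSup hAbdd htA).not_gt hct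

theorem dist_le_abs_variationOnFromTo_sub {α E : Type*} [LinearOrder α] [PseudoMetricSpace E]
    {f : α → E} {s : Set α} (hf : LocallyBoundedVariationOn f s) {a b c : α} (ha : a ∈ s)
    (hb : b ∈ s) (hc : c ∈ s) :
    dist (f b) (f c) ≤ |variationOnFromTo f s a c - variationOnFromTo f s a b| := by
  rw [← variationOnFromTo.add hf ha hb hc, add_sub_cancel_left]
  wlog hbc : b ≤ c generalizing b c
  · rw [dist_comm, variationOnFromTo.eq_neg_swap, abs_neg]
    exact this hc hb (le_of_not_ge hbc)
  rw [variationOnFromTo.eq_of_le f s hbc, abs_of_nonneg ENNReal.toReal_nonneg, dist_edist]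
  exact ENNReal.toReal_mono (hf b c hb hc)
    (eVariationOn.edist_le f ⟨hb, le_rfl, hbc⟩ ⟨hc, hbc, le_rfl⟩)

section MeanValue

variable {E F : Type*} [NormedAddCommGroup E] [NormedSpace ℝ E] [NormedAddCommGroup F]
  [NormedSpace ℝ F]

theorem HasFDerivWithinAt.eventually_norm_sub_le {f : E → F} {f' : E →L[ℝ] F} {s : Set E}
    {x : E} (hf : HasFDerivWithinAt f f' s x) {M δ : ℝ} (hM : ‖f'‖ ≤ M) (hδ : 0 < δ) :
    ∀ᶠ y in 𝓝[s] x, ‖f y - f x‖ ≤ (M + δ) * ‖y - x‖ := by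
  filter_upwards [hf.isLittleO.def hδ] with y hy
  calc ‖f y - f x‖ ≤ ‖f' (y - x)‖ + ‖f y - f x - f' (y - x)‖ := norm_le_insert' _ _
    _ ≤ M * ‖y - x‖ + δ * ‖y - x‖ := add_le_add (f'.le_of_opNorm_le hM _) hy
    _ = (M + δ) * ‖y - x‖ := by ring

theorem norm_sub_le_of_hasFDerivWithinAt_of_eVariationOn_le {g : E → F} {g' : E → E →L[ℝ] F}
    {S : Set E} {γ : ℝ → E} {a b M L : ℝ} (hab : a ≤ b) (hL : 0 ≤ L)
    (hg : ∀ z ∈ S, HasFDerivWithinAt g (g' z) S z) (hM : ∀ t ∈ Icc a b, ‖g' (γ t)‖ ≤ M)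
    (hγ : ContinuousOn γ (Icc a b)) (hγS : MapsTo γ (Icc a b) S)
    (hvar : eVariationOn γ (Icc a b) ≤ ENNReal.ofReal L) :
    ‖g (γ b) - g (γ a)‖ ≤ M * L := by
  have hM0 : 0 ≤ M := (norm_nonneg _).trans (hM a (left_mem_Icc.2 hab))
  have hBV : LocallyBoundedVariationOn γ (Icc a b) :=
    BoundedVariationOn.locallyBoundedVariationOn (ne_top_of_le_ne_top ENNReal.ofReal_ne_top hvar)
  have ha : a ∈ Icc a b := left_mem_Icc.2 hab
  set v := variationOnFromTo γ (Icc a b) a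
  have hvb : v b ≤ L := by
    simp only [v, variationOnFromTo.eq_of_le _ _ hab, inter_self]
    exact ENNReal.toReal_le_of_le_ofReal hL hvar
  have happrox : ∀ δ > 0, ‖g (γ b) - g (γ a)‖ ≤ (M + δ) * L := fun δ hδ => by
    have hdom := dist_le_sub_of_forall_eventually_dist_le (φ := g ∘ γ) (v := fun t => (M + δ) * v t)
      hab (fun s hs t ht hst => mul_le_mul_of_nonneg_left
        (variationOnFromTo.monotoneOn hBV ha hs ht hst) (by positivity)) fun c hc => by
        filter_upwards [(hγ c hc).tendsto_nhdsWithin hγS |>.eventually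
          ((hg _ (hγS hc)).eventually_norm_sub_le (hM c hc) hδ), self_mem_nhdsWithin] with t ht htI
        rw [Function.comp_apply, Function.comp_apply, dist_eq_norm, ← mul_sub, abs_mul,
          abs_of_pos (by positivity : 0 < M + δ)]
        refine ht.trans (mul_le_mul_of_nonneg_left ?_ (by positivity))
        rw [← dist_eq_norm, abs_sub_comm]
        exact dist_le_abs_variationOnFromTo_sub hBV ha htI hc
    rw [dist_comm] at hdom
    simp only [Function.comp_apply, dist_eq_norm, v, variationOnFromTo.self,
      mul_zero, sub_zero] at hdom
    exact hdom.trans (mul_le_mul_of_nonneg_left hvb (by positivity))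
  have hlim : Tendsto (fun δ => (M + δ) * L) (𝓝[>] 0) (𝓝 (M * L)) :=
    ((continuous_const.add continuous_id).mul continuous_const).tendsto' 0 _ (by simp)
      |>.mono_left nhdsWithin_le_nhds
  exact ge_of_tendsto hlim (eventually_nhdsWithin_of_forall happrox)

end MeanValue

theorem IsQuasiconvex.norm_sub_sub_fderiv_le {F : Type*} [NormedAddCommGroup F]
    [NormedSpace ℝ F] {K M : ℝ} {S : Set (EuclideanSpace ℝ (Fin m))} (hK : 0 ≤ K)
    (hS : IsQuasiconvex K S) {f : EuclideanSpace ℝ (Fin m) → F}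
    {f' : EuclideanSpace ℝ (Fin m) → EuclideanSpace ℝ (Fin m) →L[ℝ] F}
    {f'' : EuclideanSpace ℝ (Fin m) →
      EuclideanSpace ℝ (Fin m) →L[ℝ] EuclideanSpace ℝ (Fin m) →L[ℝ] F}
    (hf : ∀ z ∈ S, HasFDerivWithinAt f (f' z) S z)
    (hf' : ∀ z ∈ S, HasFDerivWithinAt f' (f'' z) S z) (hf'' : ∀ z ∈ S, ‖f'' z‖ ≤ M)
    {z₀ z₁ : EuclideanSpace ℝ (Fin m)} (hz₀ : z₀ ∈ S) (hz₁ : z₁ ∈ S) :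
    ‖f z₁ - f z₀ - f' z₀ (z₁ - z₀)‖ ≤ M * (K * ‖z₁ - z₀‖) ^ 2 := by
  obtain ⟨γ, hγ, hγ0, hγ1, hγS, hvar⟩ := hS z₀ hz₀ z₁ hz₁
  have hℓ : 0 ≤ K * ‖z₁ - z₀‖ := by positivity
  have hf'_near : ∀ t ∈ Icc (0 : ℝ) 1, ‖f' (γ t) - f' z₀‖ ≤ M * (K * ‖z₁ - z₀‖) := by
    intro t ht
    have hsub : Icc 0 t ⊆ Icc (0 : ℝ) 1 := Icc_subset_Icc le_rfl ht.2
    simpa [hγ0] using norm_sub_le_of_hasFDerivWithinAt_of_eVariationOn_le ht.1 hℓ hf'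
      (fun s hs => hf'' _ (hγS s (hsub hs))) (hγ.mono hsub) (fun s hs => hγS s (hsub hs))
      ((eVariationOn.mono γ hsub).trans hvar)
  have h := norm_sub_le_of_hasFDerivWithinAt_of_eVariationOn_le (g := fun z => f z - f' z₀ z)
    zero_le_one hℓ (fun z hz => (hf z hz).sub (f' z₀).hasFDerivWithinAt) hf'_near hγ hγS hvar
  rw [hγ0, hγ1, sub_sub_sub_comm, ← map_sub] at h
  rwa [sq, ← mul_assoc]

namespace EuclideanSpace

def snoc (z : EuclideanSpace ℝ (Fin m)) (s : ℝ) : EuclideanSpace ℝ (Fin (m + 1)) :=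
  WithLp.toLp 2 (Fin.snoc (WithLp.ofLp z) s : Fin (m + 1) → ℝ)

theorem snoc_sub_snoc (z z' : EuclideanSpace ℝ (Fin m)) (s s' : ℝ) :
    snoc z s - snoc z' s' = snoc (z - z') (s - s') := by
  ext i
  induction i using Fin.lastCases <;> simp [snoc]

theorem inner_snoc_snoc (z z' : EuclideanSpace ℝ (Fin m)) (s s' : ℝ) :
    ⟪snoc z s, snoc z' s'⟫ = ⟪z, z'⟫ + s * s' := by
  simp [snoc, PiLp.inner_apply, Fin.sum_univ_castSucc, mul_comm]

theorem norm_snoc_sq (z : EuclideanSpace ℝ (Fin m)) (s : ℝ) :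
    ‖snoc z s‖ ^ 2 = ‖z‖ ^ 2 + s ^ 2 := by
  rw [← real_inner_self_eq_norm_sq, ← real_inner_self_eq_norm_sq, inner_snoc_snoc, sq]

theorem norm_le_norm_snoc (z : EuclideanSpace ℝ (Fin m)) (s : ℝ) : ‖z‖ ≤ ‖snoc z s‖ :=
  (pow_le_pow_iff_left₀ (norm_nonneg _) (norm_nonneg _) two_ne_zero).1 <| by
    rw [norm_snoc_sq]; exact le_add_of_nonneg_right (sq_nonneg s)

theorem one_le_norm_snoc_one (z : EuclideanSpace ℝ (Fin m)) : 1 ≤ ‖snoc z 1‖ :=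
  (pow_le_pow_iff_left₀ zero_le_one (norm_nonneg _) two_ne_zero).1 <| by
    rw [norm_snoc_sq, one_pow]; exact le_add_of_nonneg_left (sq_nonneg _)

end EuclideanSpace

open EuclideanSpace

theorem mem_graphOf {S : Set (EuclideanSpace ℝ (Fin m))} {f : EuclideanSpace ℝ (Fin m) → ℝ}
    {p : EuclideanSpace ℝ (Fin (m + 1))} : p ∈ graphOf S f ↔ ∃ z ∈ S, p = snoc z (f z) :=
  Iff.rfl

theorem mem_cthickening_setOf_inner_eq {E : Type*} [NormedAddCommGroup E]
    [InnerProductSpace ℝ E] {w : E} (hw : w ≠ 0) {p : E} {t r : ℝ}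
    (h : |⟪p, w⟫ - t| / ‖w‖ ≤ r) : p ∈ cthickening r {y | ⟪y, w⟫ = t} := by
  have hw2 : ‖w‖ ^ 2 ≠ 0 := by positivity
  refine mem_cthickening_of_dist_le p (p - ((⟪p, w⟫ - t) / ‖w‖ ^ 2) • w) r _ ?_ ?_
  · simp only [mem_ofPred_eq, inner_sub_left, real_inner_smul_left, real_inner_self_eq_norm_sq,
      div_mul_cancel₀ _ hw2, sub_sub_cancel]
  · rwa [dist_eq_norm, sub_sub_cancel, norm_smul, Real.norm_eq_abs, abs_div, abs_sq, sq,
      div_mul_eq_mul_div, mul_div_mul_right _ _ (norm_ne_zero_iff.2 hw)]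

/-- `(-∇L, 1)`, normal to the graph of any function with differential `L`. -/
noncomputable def graphNormal (L : EuclideanSpace ℝ (Fin m) →L[ℝ] ℝ) :
    EuclideanSpace ℝ (Fin (m + 1)) :=
  snoc (-(InnerProductSpace.toDual ℝ _).symm L) 1

theorem inner_snoc_graphNormal (L : EuclideanSpace ℝ (Fin m) →L[ℝ] ℝ)
    (z : EuclideanSpace ℝ (Fin m)) (s : ℝ) : ⟪snoc z s, graphNormal L⟫ = s - L z := by
  rw [graphNormal, inner_snoc_snoc, inner_neg_right, real_inner_comm,
    InnerProductSpace.toDual_symm_apply]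
  ring

theorem graphNormal_ne_zero (L : EuclideanSpace ℝ (Fin m) →L[ℝ] ℝ) : graphNormal L ≠ 0 :=
  norm_pos_iff.1 (zero_lt_one.trans_le (one_le_norm_snoc_one _))

def tangentHyperplane (f : EuclideanSpace ℝ (Fin m) → ℝ) (L : EuclideanSpace ℝ (Fin m) →L[ℝ] ℝ)
    (z₀ : EuclideanSpace ℝ (Fin m)) : Set (EuclideanSpace ℝ (Fin (m + 1))) :=
  {y | ⟪y, graphNormal L⟫ = f z₀ - L z₀}

theorem exists_dist_lt_two_mul_of_mem_cthickening {X : Type*} [PseudoMetricSpace X] {s : Set X}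
    {x : X} {δ : ℝ} (hδ : 0 < δ) (hx : x ∈ cthickening δ s) : ∃ p ∈ s, dist x p < 2 * δ :=
  mem_thickening_iff.1 (cthickening_subset_thickening' (by positivity) (by linarith) _ hx)

section Graph

variable {K M : ℝ} {S : Set (EuclideanSpace ℝ (Fin m))} {f : EuclideanSpace ℝ (Fin m) → ℝ}
  {f' : EuclideanSpace ℝ (Fin m) → EuclideanSpace ℝ (Fin m) →L[ℝ] ℝ}
  {f'' : EuclideanSpace ℝ (Fin m) →
    EuclideanSpace ℝ (Fin m) →L[ℝ] EuclideanSpace ℝ (Fin m) →L[ℝ] ℝ}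

theorem IsQuasiconvex.snoc_mem_cthickening_tangentHyperplane (hK : 0 ≤ K)
    (hS : IsQuasiconvex K S) (hf : ∀ z ∈ S, HasFDerivWithinAt f (f' z) S z)
    (hf' : ∀ z ∈ S, HasFDerivWithinAt f' (f'' z) S z) (hf'' : ∀ z ∈ S, ‖f'' z‖ ≤ M)
    {z₀ z : EuclideanSpace ℝ (Fin m)} (hz₀ : z₀ ∈ S) (hz : z ∈ S) :
    snoc z (f z) ∈ cthickening (M * (K * ‖z - z₀‖) ^ 2) (tangentHyperplane f (f' z₀) z₀) := by
  refine mem_cthickening_setOf_inner_eq (graphNormal_ne_zero _) ?_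
  rw [inner_snoc_graphNormal, sub_sub_sub_comm, ← map_sub, ← Real.norm_eq_abs]
  exact (div_le_self (abs_nonneg _) (one_le_norm_snoc_one _)).trans
    (hS.norm_sub_sub_fderiv_le hK hf hf' hf'' hz₀ hz)

theorem IsQuasiconvex.closedBall_inter_cthickening_graphOf_subset (hK : 0 ≤ K)
    (hS : IsQuasiconvex K S) (hf : ∀ z ∈ S, HasFDerivWithinAt f (f' z) S z)
    (hf' : ∀ z ∈ S, HasFDerivWithinAt f' (f'' z) S z) (hf'' : ∀ z ∈ S, ‖f'' z‖ ≤ M)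
    {z₀ : EuclideanSpace ℝ (Fin m)} (hz₀ : z₀ ∈ S) {r δ : ℝ} (hδ : 0 < δ) :
    closedBall (snoc z₀ (f z₀)) r ∩ cthickening δ (graphOf S f) ⊆
      cthickening (2 * δ + M * (K * (r + 2 * δ)) ^ 2) (tangentHyperplane f (f' z₀) z₀) := by
  have hM : 0 ≤ M := (norm_nonneg (f'' z₀)).trans (hf'' z₀ hz₀)
  rintro q ⟨hq, hqΓ⟩
  obtain ⟨p, hp, hqp⟩ := exists_dist_lt_two_mul_of_mem_cthickening hδ hqΓ
  obtain ⟨z, hz, rfl⟩ := mem_graphOf.1 hp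
  have hzz₀ : ‖z - z₀‖ ≤ r + 2 * δ := calc
    ‖z - z₀‖ ≤ dist (snoc z (f z)) (snoc z₀ (f z₀)) := by
      rw [dist_eq_norm, snoc_sub_snoc]; exact norm_le_norm_snoc _ _
    _ ≤ dist q (snoc z (f z)) + dist q (snoc z₀ (f z₀)) := dist_triangle_left _ _ _
    _ ≤ r + 2 * δ := by linarith [mem_closedBall.1 hq]
  refine cthickening_cthickening_subset (by positivity) (by positivity) _ <|
    mem_cthickening_of_dist_le q _ _ _ ?_ hqp.le
  refine cthickening_mono ?_ _ (hS.snoc_mem_cthickening_tangentHyperplane hK hf hf' hf'' hz₀ hz)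
  gcongr

theorem AbsDecaying.measure_closedBall_inter_cthickening_graphOf_le {α Cd ρ₀ : ℝ}
    {μ : Measure (EuclideanSpace ℝ (Fin (m + 1)))} (hdec : AbsDecaying α Cd ρ₀ μ) (hK : 0 ≤ K)
    (hS : IsQuasiconvex K S) (hf : ∀ z ∈ S, HasFDerivWithinAt f (f' z) S z)
    (hf' : ∀ z ∈ S, HasFDerivWithinAt f' (f'' z) S z) (hf'' : ∀ z ∈ S, ‖f'' z‖ ≤ M)
    {b : EuclideanSpace ℝ (Fin (m + 1))} (hb : b ∈ msupp μ) {u δ κ : ℝ} (hu : 0 < u)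
    (huρ₀ : u ≤ ρ₀) (hδ : 0 < δ) (hδu : 2 * δ ≤ u) (hκ : 0 < κ)
    (hwidth : 2 * δ + M * (K * (3 * u)) ^ 2 ≤ κ * u) (hbΓ : b ∈ cthickening δ (graphOf S f)) :
    μ (closedBall b u ∩ cthickening δ (graphOf S f)) ≤
      ENNReal.ofReal (Cd * κ ^ α) * μ (closedBall b u) := by
  obtain ⟨p, hp, hbp⟩ := exists_dist_lt_two_mul_of_mem_cthickening hδ hbΓ
  obtain ⟨z₀, hz₀, rfl⟩ := mem_graphOf.1 hp
  have hM : 0 ≤ M := (norm_nonneg (f'' z₀)).trans (hf'' z₀ hz₀)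
  have hsub : closedBall b u ∩ cthickening δ (graphOf S f) ⊆
      cthickening (κ * u) (tangentHyperplane f (f' z₀) z₀) := by
    refine (inter_subset_inter_left _ (closedBall_subset_closedBall' ?_)).trans
      ((hS.closedBall_inter_cthickening_graphOf_subset (r := u + 2 * δ) hK hf hf' hf'' hz₀ hδ).trans
        (cthickening_mono (hwidth.trans' ?_) _))
    · linarith [dist_comm b (snoc z₀ (f z₀))]
    · gcongr; linarith
  exact (measure_mono (subset_inter inter_subset_left hsub)).trans
    (hdec b hb u hu huρ₀ _ _ (graphNormal_ne_zero _) κ hκ)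

end Graph

theorem msupp_eq_support {X : Type*} [MetricSpace X] [MeasurableSpace X] (μ : Measure X) :
    msupp μ = μ.support := by
  ext x
  exact nhds_basis_ball.mem_measureSupport.symm

theorem Federer.measure_closedBall_le {C ρ₀ : ℝ} {μ : Measure (EuclideanSpace ℝ (Fin (m + 1)))}
    (hFed : Federer C ρ₀ μ) {x : EuclideanSpace ℝ (Fin (m + 1))} (hx : x ∈ msupp μ) {r : ℝ}
    (hr : 0 < r) (hrρ₀ : r ≤ ρ₀) :
    μ (closedBall x r) ≤ ENNReal.ofReal C ^ 2 * μ (closedBall x (r / 4)) := by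
  have h₁ := hFed x hx (r / 2) (by positivity) (by linarith)
  have h₂ := hFed x hx (r / 4) (by positivity) (by linarith)
  rw [show 2 * (r / 2) = r by ring] at h₁
  rw [show 2 * (r / 4) = r / 2 by ring] at h₂
  exact h₁.trans ((mul_le_mul_right h₂ _).trans_eq (by rw [sq, mul_assoc]))

theorem Federer.measure_cthickening_le {CF ρ₀ κ δ u : ℝ}
    {μ : Measure (EuclideanSpace ℝ (Fin (m + 1)))} (hFed : Federer CF ρ₀ μ)
    {T : Set (EuclideanSpace ℝ (Fin (m + 1)))} (hδ : 0 < δ) (hδu : 3 * δ ≤ u) (huρ₀ : u ≤ ρ₀)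
    (hloc : ∀ b ∈ cthickening δ T ∩ msupp μ,
      μ (closedBall b u ∩ cthickening δ T) ≤ ENNReal.ofReal κ * μ (closedBall b u)) :
    μ (cthickening δ T) ≤ ENNReal.ofReal κ * ENNReal.ofReal CF ^ 2 * μ (cthickening u T) := by
  have hu : 0 < u := by linarith
  obtain ⟨U, hUA, hUdisj, hUcov⟩ :=
    Vitali.exists_disjoint_subfamily_covering_enlargement_closedBall (cthickening δ T ∩ msupp μ)
      id (fun _ => u / 4) (u / 4) (fun _ _ => le_rfl) 4 (by norm_num)
  simp only [id] at hUdisj hUcov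
  have hUc : U.Countable := hUdisj.countable_of_nonempty_interior fun b _ =>
    ⟨b, ball_subset_interior_closedBall (mem_ball_self (by positivity))⟩
  have hcover : cthickening δ T ∩ msupp μ ⊆ ⋃ b ∈ U, closedBall b u ∩ cthickening δ T := by
    intro a ha
    obtain ⟨b, hbU, hab⟩ := hUcov a ha
    refine mem_biUnion hbU ⟨?_, ha.1⟩
    simpa [mul_div_cancel₀] using hab (mem_closedBall_self (by positivity))
  have hquarter : ∀ b ∈ U, closedBall b (u / 4) ⊆ cthickening u T := by
    intro b hb y hy
    obtain ⟨p, hp, hbp⟩ := exists_dist_lt_two_mul_of_mem_cthickening hδ (hUA hb).1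
    exact mem_cthickening_of_dist_le y p u T hp
      (by linarith [dist_triangle y b p, mem_closedBall.1 hy])
  calc μ (cthickening δ T)
      = μ (cthickening δ T ∩ msupp μ) := by
        rw [measure_inter_conull (by rw [msupp_eq_support]; exact Measure.measure_compl_support)]
    _ ≤ ∑' b : U, μ (closedBall b u ∩ cthickening δ T) :=
        (measure_mono hcover).trans (measure_biUnion_le μ hUc _)
    _ ≤ ∑' b : U, ENNReal.ofReal κ * (ENNReal.ofReal CF ^ 2 * μ (closedBall b (u / 4))) :=
        ENNReal.tsum_le_tsum fun b => (hloc b (hUA b.2)).trans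
          (mul_le_mul_right (hFed.measure_closedBall_le (hUA b.2).2 hu huρ₀) _)
    _ = ENNReal.ofReal κ * ENNReal.ofReal CF ^ 2 * μ (⋃ b ∈ U, closedBall b (u / 4)) := by
        rw [measure_biUnion hUc hUdisj fun _ _ => measurableSet_closedBall,
          ENNReal.tsum_mul_left, ENNReal.tsum_mul_left, mul_assoc]
    _ ≤ ENNReal.ofReal κ * ENNReal.ofReal CF ^ 2 * μ (cthickening u T) :=
        mul_le_mul_right (measure_mono (iUnion₂_subset hquarter)) _

theorem measure_cthickening_subset_graphOf_le {α Cd CF ρ₀ K M : ℝ}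
    {μ : Measure (EuclideanSpace ℝ (Fin (m + 1)))} (hdec : AbsDecaying α Cd ρ₀ μ)
    (hFed : Federer CF ρ₀ μ) {S : Set (EuclideanSpace ℝ (Fin m))}
    {f : EuclideanSpace ℝ (Fin m) → ℝ}
    {f' : EuclideanSpace ℝ (Fin m) → EuclideanSpace ℝ (Fin m) →L[ℝ] ℝ}
    {f'' : EuclideanSpace ℝ (Fin m) →
      EuclideanSpace ℝ (Fin m) →L[ℝ] EuclideanSpace ℝ (Fin m) →L[ℝ] ℝ} (hK : 0 ≤ K)
    (hS : IsQuasiconvex K S) (hf : ∀ z ∈ S, HasFDerivWithinAt f (f' z) S z)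
    (hf' : ∀ z ∈ S, HasFDerivWithinAt f' (f'' z) S z) (hf'' : ∀ z ∈ S, ‖f'' z‖ ≤ M)
    {T : Set (EuclideanSpace ℝ (Fin (m + 1)))} (hT : T ⊆ graphOf S f) {δ u κ : ℝ} (hδ : 0 < δ)
    (hδu : 3 * δ ≤ u) (huρ₀ : u ≤ ρ₀) (hκ : 0 < κ)
    (hwidth : 2 * δ + M * (K * (3 * u)) ^ 2 ≤ κ * u) :
    μ (cthickening δ T) ≤
      ENNReal.ofReal (Cd * κ ^ α) * ENNReal.ofReal CF ^ 2 * μ (cthickening u T) := by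
  have hTΓ : cthickening δ T ⊆ cthickening δ (graphOf S f) := cthickening_subset_of_subset _ hT
  refine hFed.measure_cthickening_le hδ hδu huρ₀ fun b hb => ?_
  exact (measure_mono (inter_subset_inter_right _ hTΓ)).trans
    (hdec.measure_closedBall_inter_cthickening_graphOf_le hK hS hf hf' hf'' hb.2 (by linarith)
      huρ₀ hδ (by linarith) hκ hwidth (hTΓ hb.1))

theorem graph_neighborhood_sqrt_decay_general (α K₁ K₂ : ℝ) (hα : 0 < α) (hK₁ : 0 < K₁)
    (hK₂ : 0 < K₂) (μ : Measure (EuclideanSpace ℝ (Fin (m + 1))))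
    (Cd CF ρ₀ : ℝ) (hCd : 0 < Cd) (hCF : 0 < CF)
    (hdec : AbsDecaying α Cd ρ₀ μ) (hFed : Federer CF ρ₀ μ) :
    ∃ C > (0 : ℝ), ∀ (S : Set (EuclideanSpace ℝ (Fin m)))
      (f : EuclideanSpace ℝ (Fin m) → ℝ)
      (f' : EuclideanSpace ℝ (Fin m) → (EuclideanSpace ℝ (Fin m) →L[ℝ] ℝ))
      (f'' : EuclideanSpace ℝ (Fin m) →
        (EuclideanSpace ℝ (Fin m) →L[ℝ] EuclideanSpace ℝ (Fin m) →L[ℝ] ℝ))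
      (x : EuclideanSpace ℝ (Fin (m + 1))) (ρ ε : ℝ),
      IsQuasiconvex K₁ S →
      (∀ z ∈ S, HasFDerivWithinAt f (f' z) S z) →
      (∀ z ∈ S, HasFDerivWithinAt f' (f'' z) S z) →
      (∀ z ∈ S, ‖f'' z‖ ≤ K₂ / ρ) →
      x ∈ msupp μ → 0 < ρ → ρ ≤ ρ₀ → 0 < ε → ε ≤ 1 →
      μ (cthickening (ε * ρ) (closedBall x ρ ∩ graphOf S f)) ≤
        ENNReal.ofReal (C * ε ^ (α / 2)) *
          μ (cthickening (Real.sqrt ε * ρ) (closedBall x ρ ∩ graphOf S f)) := by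
  set c := 2 + 9 * K₁ ^ 2 * K₂ with hc
  refine ⟨9 ^ (α / 2) + Cd * c ^ α * CF ^ 2, by positivity, ?_⟩
  intro S f f' f'' x ρ ε hS hf hf' hf'' hx hρ hρρ₀ hε hε1
  have hD : 0 ≤ Cd * c ^ α * CF ^ 2 := by positivity
  have hεα : 0 ≤ ε ^ (α / 2) := by positivity
  rcases lt_or_ge (1 / 9) ε with hε9 | hε9
  · refine (measure_mono (cthickening_mono ?_ _)).trans (le_mul_of_one_le_left' ?_)
    · gcongr; exact Real.le_sqrt_self_iff.2 hε1
    · rw [ENNReal.one_le_ofReal]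
      calc 1 ≤ (9 * ε) ^ (α / 2) := Real.one_le_rpow (by linarith) (by positivity)
        _ ≤ _ := by rw [Real.mul_rpow (by norm_num) hε.le]; nlinarith
  -- scales `u = √ε ρ` and `δ = ε ρ = √ε u ≤ u / 3`; the graph has width `κ u = c √ε u` on `B(b, u)`
  have hsqrt3 : √ε ≤ 1 / 3 := (Real.sqrt_le_left (by norm_num)).2 (by linarith)
  have hss : √ε * √ε = ε := Real.mul_self_sqrt hε.le
  have hwidth : 2 * (ε * ρ) + K₂ / ρ * (K₁ * (3 * (√ε * ρ))) ^ 2 ≤ c * √ε * (√ε * ρ) := by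
    have h : K₂ / ρ * (K₁ * (3 * (√ε * ρ))) ^ 2 = 9 * K₁ ^ 2 * K₂ * (ε * ρ) := by
      rw [mul_pow, mul_pow, mul_pow, Real.sq_sqrt hε.le]; field_simp; norm_num
    rw [h, mul_assoc c, ← mul_assoc √ε, hss, hc]
    linarith
  have hδu : 3 * (ε * ρ) ≤ √ε * ρ := by
    nlinarith [mul_nonneg (by positivity : 0 ≤ √ε * ρ) (by linarith : 0 ≤ 1 - 3 * √ε)]
  refine (measure_cthickening_subset_graphOf_le hdec hFed hK₁.le hS hf hf' hf'' inter_subset_right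
    (by positivity) hδu (by nlinarith) (by positivity) hwidth).trans (mul_le_mul_left ?_ _)
  rw [← ENNReal.ofReal_pow hCF.le, ← ENNReal.ofReal_mul (by positivity),
    Real.mul_rpow (by positivity) (Real.sqrt_nonneg ε), Real.sqrt_eq_rpow, ← Real.rpow_mul hε.le,
    one_div_mul_eq_div]
  have h9 : (0 : ℝ) ≤ 9 ^ (α / 2) * ε ^ (α / 2) := by positivity
  exact ENNReal.ofReal_le_ofReal (by nlinarith)

/-- Square-root decay for neighborhoods of graphs: if `μ` is absolutely `α`-decaying,
Federer and compactly supported, `S` is `K₁`-quasiconvex and `‖f''‖_S ≤ K₂/ρ`, then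
for balls `B = B(x,ρ)` centered on the support (`ρ ≤ ρ₀`) and `0 < ε ≤ 1`,
`μ((B ∩ Γ)^{(ερ)}) ≤ C ε^{α/2} μ((B ∩ Γ)^{(√ε ρ)})` with `C = C(K₁,K₂,μ)`. -/
theorem graph_neighborhood_sqrt_decay (α K₁ K₂ : ℝ) (hα : 0 < α) (hK₁ : 0 < K₁)
    (hK₂ : 0 < K₂) (μ : Measure (EuclideanSpace ℝ (Fin (m + 1))))
    (Cd CF ρ₀ : ℝ) (hCd : 0 < Cd) (hCF : 0 < CF) (hρ₀ : 0 < ρ₀)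
    (hdec : AbsDecaying α Cd ρ₀ μ) (hFed : Federer CF ρ₀ μ)
    (hcpt : IsCompact (msupp μ)) :
    ∃ C > (0 : ℝ), ∀ (S : Set (EuclideanSpace ℝ (Fin m)))
      (f : EuclideanSpace ℝ (Fin m) → ℝ)
      (f' : EuclideanSpace ℝ (Fin m) → (EuclideanSpace ℝ (Fin m) →L[ℝ] ℝ))
      (f'' : EuclideanSpace ℝ (Fin m) →
        (EuclideanSpace ℝ (Fin m) →L[ℝ] EuclideanSpace ℝ (Fin m) →L[ℝ] ℝ))
      (x : EuclideanSpace ℝ (Fin (m + 1))) (ρ ε : ℝ),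
      IsQuasiconvex K₁ S →
      (∀ z ∈ S, HasFDerivWithinAt f (f' z) S z) →
      (∀ z ∈ S, HasFDerivWithinAt f' (f'' z) S z) →
      (∀ z ∈ S, ‖f'' z‖ ≤ K₂ / ρ) →
      x ∈ msupp μ → 0 < ρ → ρ ≤ ρ₀ → 0 < ε → ε ≤ 1 →
      μ (cthickening (ε * ρ) (closedBall x ρ ∩ graphOf S f)) ≤
        ENNReal.ofReal (C * ε ^ (α / 2)) *
          μ (cthickening (Real.sqrt ε * ρ) (closedBall x ρ ∩ graphOf S f)) :=
  graph_neighborhood_sqrt_decay_general α K₁ K₂ hα hK₁ hK₂ μ Cd CF ρ₀ hCd hCF hdec hFed
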